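/- arXiv:1410.3928 — 4 statements merged into one kernel-verified Lean document; each statement's English description precedes it below -/
import Mathlib

section
/- Let H be a self-adjoint operator on a finite-dimensional complex Hilbert space and A a self-adjoint operator. Then for every positive integer n, |Tr(A e^{-βH})| ≤ (Tr((A e^{-βH/(2n)})^{2n}))^{1/(2n)} · (Tr(e^{-βH}))^{1-1/(2n)}. -/
/-!
Put `K = e^{-βH/(2n)} = R²` with `R = e^{-βH/(4n)}` Hermitian, `C = R A R` and `m = 2n`.
By cyclicity of the trace, `Tr(A e^{-βH}) = Tr(C K^{m-1})` and `Tr((A K)^m) = Tr(C^m)`.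
Diagonalising `C = U diag(c) U*` and `K = V diag(μ) V*` with `μ ≥ 0` gives
`Tr(C K^{m-1}) = ∑ⱼ cⱼ ∑ᵢ Pⱼᵢ μᵢ^{m-1}`, where `Pⱼᵢ = |(U* V)ⱼᵢ|²` is doubly stochastic because
`U* V` is unitary. Hölder's inequality with exponents `m` and `q = m/(m-1)`, followed by Jensen's
inequality for `x ↦ x^q` averaged along the rows of `P` (the columns of `P` then sum to one),
bounds this by `(∑ cⱼ^m)^{1/m} (∑ μᵢ^m)^{1-1/m}`.
-/

open Matrix Finset Unitary
open scoped ComplexOrder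

section DoublyStochastic

variable {ι : Type*} [Fintype ι] [DecidableEq ι]

theorem ConvexOn.sum_comp_mulVec_le_of_mem_doublyStochastic {s : Set ℝ} {f : ℝ → ℝ}
    (hf : ConvexOn ℝ s f) {P : Matrix ι ι ℝ} (hP : P ∈ doublyStochastic ℝ ι) {x : ι → ℝ}
    (hx : ∀ i, x i ∈ s) :
    ∑ j, f ((P *ᵥ x) j) ≤ ∑ i, f (x i) := by
  obtain ⟨hP0, hrow, hcol⟩ := mem_doublyStochastic_iff_sum.mp hP
  calc ∑ j, f ((P *ᵥ x) j) ≤ ∑ j, ∑ i, P j i * f (x i) :=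
        sum_le_sum fun j _ => hf.map_sum_le (fun i _ => hP0 j i) (hrow j) fun i _ => hx i
    _ = ∑ i, f (x i) := by
        rw [sum_comm]
        simp only [← sum_mul, hcol, one_mul]

theorem abs_dotProduct_mulVec_le {P : Matrix ι ι ℝ} (hP : P ∈ doublyStochastic ℝ ι)
    {p q : ℝ} (hpq : p.HolderConjugate q) (c : ι → ℝ) {x : ι → ℝ} (hx : 0 ≤ x) :
    |c ⬝ᵥ (P *ᵥ x)| ≤ (∑ j, |c j| ^ p) ^ (1 / p) * (∑ i, x i ^ q) ^ (1 / q) := by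
  have hPx : 0 ≤ P *ᵥ x := nonneg_mulVec_of_mem_rowStochastic
    (mem_doublyStochastic_iff_mem_rowStochastic_and_mem_colStochastic.mp hP).1 hx
  have jensen : ∑ j, (P *ᵥ x) j ^ q ≤ ∑ i, x i ^ q :=
    (convexOn_rpow hpq.symm.lt.le).sum_comp_mulVec_le_of_mem_doublyStochastic hP fun i => hx i
  calc |c ⬝ᵥ (P *ᵥ x)| ≤ ∑ j, |c j| * (P *ᵥ x) j := by
        refine (abs_sum_le_sum_abs _ _).trans_eq (sum_congr rfl fun j _ => ?_)
        rw [abs_mul, abs_of_nonneg (hPx j)]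
    _ ≤ (∑ j, |c j| ^ p) ^ (1 / p) * (∑ j, (P *ᵥ x) j ^ q) ^ (1 / q) :=
        Real.inner_le_Lp_mul_Lq_of_nonneg _ hpq (fun j _ => abs_nonneg _) fun j _ => hPx j
    _ ≤ (∑ j, |c j| ^ p) ^ (1 / p) * (∑ i, x i ^ q) ^ (1 / q) := by
        gcongr
        exacts [sum_nonneg fun j _ => Real.rpow_nonneg (hPx j) _, hpq.symm.one_div_nonneg]

theorem abs_dotProduct_mulVec_pow_le {P : Matrix ι ι ℝ} (hP : P ∈ doublyStochastic ℝ ι)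
    (c : ι → ℝ) {μ : ι → ℝ} (hμ : 0 ≤ μ) {m : ℕ} (hm : 1 < m) :
    |c ⬝ᵥ (P *ᵥ μ ^ (m - 1))| ≤
      (∑ j, |c j| ^ m) ^ (1 / m : ℝ) * (∑ i, μ i ^ m) ^ (1 - 1 / m : ℝ) := by
  have hpq : (m : ℝ).HolderConjugate (Real.conjExponent m) :=
    .conjExponent (by exact_mod_cast hm)
  have hμq (i : ι) : (μ i ^ (m - 1)) ^ Real.conjExponent m = μ i ^ m := by
    rw [← Real.rpow_natCast, ← Real.rpow_mul (hμ i), Nat.cast_pred (by omega),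
      hpq.sub_one_mul_conj, Real.rpow_natCast]
  convert abs_dotProduct_mulVec_le hP hpq c (pow_nonneg hμ (m - 1)) using 3
  · simp only [Real.rpow_natCast]
  · simp only [Pi.pow_apply, hμq]
  · rw [one_div, one_div, hpq.one_sub_inv]

end DoublyStochastic

namespace Matrix

variable {n : Type*} [Fintype n] [DecidableEq n]

section CommSemiring

variable {α : Type*} [CommSemiring α]

theorem trace_pow_mul_comm (X Y : Matrix n n α) (m : ℕ) :
    ((X * Y) ^ m).trace = ((Y * X) ^ m).trace := by
  cases m with
  | zero => rfl
  | succ k =>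
    rw [pow_succ', Matrix.mul_assoc, trace_mul_comm, Matrix.mul_assoc, mul_pow_mul,
      ← Matrix.mul_assoc, ← pow_succ']

theorem trace_mul_mul_self_pow_succ (A R : Matrix n n α) (k : ℕ) :
    (A * (R * R) ^ (k + 1)).trace = (R * A * R * (R * R) ^ k).trace := by
  calc (A * (R * R) ^ (k + 1)).trace = (A * R * (R * R) ^ k * R).trace := by
        rw [pow_succ', Matrix.mul_assoc (A * R), mul_pow_mul]
        simp only [Matrix.mul_assoc]
    _ = (R * A * R * (R * R) ^ k).trace := by
        rw [trace_mul_comm]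
        simp only [Matrix.mul_assoc]

end CommSemiring

variable {𝕜 : Type*} [RCLike 𝕜]

theorem map_sq_norm_mem_doublyStochastic {U : Matrix n n 𝕜} (hU : U ∈ unitaryGroup n 𝕜) :
    U.map (‖·‖ ^ 2) ∈ doublyStochastic ℝ n := by
  have sum_sq_norm (V : Matrix n n 𝕜) (hV : V * star V = 1) (i : n) : ∑ j, ‖V i j‖ ^ 2 = 1 := by
    have := congr_fun₂ hV i i
    simp only [mul_apply, star_apply, RCLike.star_def, RCLike.mul_conj, one_apply_eq] at this
    exact_mod_cast this
  refine mem_doublyStochastic_iff_sum.mpr ⟨fun i j => sq_nonneg _, sum_sq_norm U ?_, fun j => ?_⟩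
  · exact mem_unitaryGroup_iff.mp hU
  · simpa [star_apply] using sum_sq_norm (star U) (mem_unitaryGroup_iff.mp (star_mem hU)) j

theorem trace_conjStarAlgAut (u : unitaryGroup n 𝕜) (X : Matrix n n 𝕜) :
    (conjStarAlgAut 𝕜 _ u X).trace = X.trace := by
  rw [conjStarAlgAut_apply, trace_mul_cycle, coe_star_mul_self, one_mul]

theorem trace_conjStarAlgAut_diagonal_mul (u v : unitaryGroup n 𝕜) (f g : n → ℝ) :
    (conjStarAlgAut 𝕜 _ u (diagonal (RCLike.ofReal ∘ f)) *
        conjStarAlgAut 𝕜 _ v (diagonal (RCLike.ofReal ∘ g))).trace =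
      ((f ⬝ᵥ ((↑(star u * v) : Matrix n n 𝕜).map (‖·‖ ^ 2) *ᵥ g) : ℝ) : 𝕜) := by
  set W : Matrix n n 𝕜 := ↑(star u * v)
  have hconj : conjStarAlgAut 𝕜 _ u (diagonal (RCLike.ofReal ∘ f)) *
        conjStarAlgAut 𝕜 _ v (diagonal (RCLike.ofReal ∘ g)) =
      conjStarAlgAut 𝕜 _ u
        (diagonal (RCLike.ofReal ∘ f) * W * diagonal (RCLike.ofReal ∘ g) * star W) := by
    simp [W, mul_assoc]
  rw [hconj, trace_conjStarAlgAut]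
  simp only [trace, diag_apply, mul_apply, diagonal_apply, star_apply, Function.comp_apply,
    mul_ite, mul_zero, ite_mul, zero_mul, sum_ite_eq, sum_ite_eq', mem_univ, if_true]
  push_cast [dotProduct, mulVec, map_apply, mul_sum]
  refine sum_congr rfl fun j _ => sum_congr rfl fun i _ => ?_
  rw [← RCLike.mul_conj, RCLike.star_def]
  ring

theorem IsHermitian.pow_eq_conjStarAlgAut_diagonal {A : Matrix n n 𝕜} (hA : A.IsHermitian)
    (k : ℕ) : A ^ k = conjStarAlgAut 𝕜 _ hA.eigenvectorUnitary
      (diagonal (RCLike.ofReal ∘ (hA.eigenvalues ^ k))) := by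
  conv_lhs => rw [hA.spectral_theorem]
  rw [← map_pow, diagonal_pow]
  congr with i
  simp

theorem IsHermitian.trace_pow {A : Matrix n n 𝕜} (hA : A.IsHermitian) (k : ℕ) :
    (A ^ k).trace = ((∑ i, hA.eigenvalues i ^ k : ℝ) : 𝕜) := by
  rw [hA.pow_eq_conjStarAlgAut_diagonal, trace_conjStarAlgAut, trace_diagonal, RCLike.ofReal_sum]
  rfl

theorem norm_trace_mul_pow_le {C K : Matrix n n 𝕜} (hC : C.IsHermitian)
    (hK : K.PosSemidef) {m : ℕ} (hm : 1 < m) (hm_even : Even m) :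
    ‖(C * K ^ (m - 1)).trace‖ ≤
      ‖(C ^ m).trace‖ ^ (1 / m : ℝ) * ‖(K ^ m).trace‖ ^ (1 - 1 / m : ℝ) := by
  have hμ : 0 ≤ hK.isHermitian.eigenvalues := fun i => hK.eigenvalues_nonneg i
  have hP := map_sq_norm_mem_doublyStochastic
    (star hC.eigenvectorUnitary * hK.isHermitian.eigenvectorUnitary).2
  have key := abs_dotProduct_mulVec_pow_le hP hC.eigenvalues hμ hm
  have htrace : (C * K ^ (m - 1)).trace = ((hC.eigenvalues ⬝ᵥ
      ((↑(star hC.eigenvectorUnitary * hK.isHermitian.eigenvectorUnitary) : Matrix n n 𝕜).map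
        (‖·‖ ^ 2) *ᵥ hK.isHermitian.eigenvalues ^ (m - 1)) : ℝ) : 𝕜) := by
    rw [← trace_conjStarAlgAut_diagonal_mul, ← hK.isHermitian.pow_eq_conjStarAlgAut_diagonal,
      ← hC.spectral_theorem]
  rw [htrace, hC.trace_pow, hK.isHermitian.trace_pow, RCLike.norm_ofReal, RCLike.norm_ofReal,
    RCLike.norm_ofReal, abs_of_nonneg (sum_nonneg fun i _ => pow_nonneg (hμ i) _)]
  simp only [hm_even.pow_abs] at key
  rwa [abs_of_nonneg (sum_nonneg fun i _ => hm_even.pow_nonneg (hC.eigenvalues i))]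

theorem norm_trace_mul_mul_self_pow_le {A R : Matrix n n 𝕜} (hA : A.IsHermitian)
    (hR : R.IsHermitian) {m : ℕ} (hm : 1 < m) (hm_even : Even m) :
    ‖(A * (R * R) ^ m).trace‖ ≤
      ‖((A * (R * R)) ^ m).trace‖ ^ (1 / m : ℝ) * ‖((R * R) ^ m).trace‖ ^ (1 - 1 / m : ℝ) := by
  obtain ⟨k, rfl⟩ : ∃ k, m = k + 1 := ⟨m - 1, by omega⟩
  have hC : (R * A * R).IsHermitian := by
    simpa [hR.eq] using isHermitian_mul_mul_conjTranspose R hA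
  have hK : (R * R).PosSemidef := by
    simpa [hR.eq] using posSemidef_conjTranspose_mul_self R
  rw [trace_mul_mul_self_pow_succ, ← Matrix.mul_assoc, trace_pow_mul_comm, ← Matrix.mul_assoc]
  simpa using norm_trace_mul_pow_le hC hK hm hm_even

end Matrix

theorem generalized_holder_selfAdjoint_general
    {d : ℕ} (H A : Matrix (Fin d) (Fin d) ℂ) (hH : H.IsHermitian) (hA : A.IsHermitian)
    (β : ℝ) (n : ℕ) (hn : 0 < n) :
    ‖(A * NormedSpace.exp ((-β : ℂ) • H)).trace‖ ≤
      ‖((A * NormedSpace.exp ((-(β / (2 * n)) : ℂ) • H)) ^ (2 * n)).trace‖ ^ ((1 : ℝ) / (2 * n))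
        * ‖(NormedSpace.exp ((-β : ℂ) • H)).trace‖ ^ ((1 : ℝ) - 1 / (2 * n)) := by
  set t : ℂ := -(β / (2 * n))
  set R := NormedSpace.exp ((t / 2) • H)
  have hR : R.IsHermitian := (hH.smul (by simp [IsSelfAdjoint, t])).exp
  have hRR : R * R = NormedSpace.exp (t • H) := by
    rw [← sq, ← Matrix.exp_nsmul, ← Nat.cast_smul_eq_nsmul ℂ, smul_smul, Nat.cast_ofNat,
      mul_div_cancel₀ _ two_ne_zero]
  have hpow : (R * R) ^ (2 * n) = NormedSpace.exp ((-β : ℂ) • H) := by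
    have : (n : ℂ) ≠ 0 := by exact_mod_cast hn.ne'
    rw [hRR, ← Matrix.exp_nsmul, ← Nat.cast_smul_eq_nsmul ℂ, smul_smul]
    congr 2
    simp only [t]
    push_cast
    field_simp
  rw [← hpow, ← hRR]
  exact_mod_cast norm_trace_mul_mul_self_pow_le hA hR (m := 2 * n) (by omega) (even_two_mul n)

/-- Generalized Hölder inequality, self-adjoint version: for Hermitian matrices `H` and `A`,
`|Tr(A e^{-βH})| ≤ (Tr((A e^{-βH/(2n)})^{2n}))^{1/(2n)} · (Tr(e^{-βH}))^{1-1/(2n)}`. -/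
theorem generalized_holder_selfAdjoint
    {d : ℕ} (H A : Matrix (Fin d) (Fin d) ℂ) (hH : H.IsHermitian) (hA : A.IsHermitian)
    (β : ℝ) (hβ : 0 ≤ β) (n : ℕ) (hn : 0 < n) :
    ‖(A * NormedSpace.exp ((-β : ℂ) • H)).trace‖ ≤
      ‖((A * NormedSpace.exp ((-(β / (2 * n)) : ℂ) • H)) ^ (2 * n)).trace‖ ^ ((1 : ℝ) / (2 * n))
        * ‖(NormedSpace.exp ((-β : ℂ) • H)).trace‖ ^ ((1 : ℝ) - 1 / (2 * n)) :=
  generalized_holder_selfAdjoint_general H A hH hA β n hn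
end

section
/- Let (c_k)_{k=0}^{2n} be nonnegative real numbers with c_0 > 0, satisfying c_k^2 ≤ c_{2k} c_0 for all k ≤ n and c_k^2 ≤ c_{2n} c_{2k-2n} for all n ≤ k ≤ 2n. Then c_1 ≤ c_0 (c_{2n}/c_0)^{1/(2n)}, i.e., c_1^{2n} ≤ c_0^{2n-1} c_{2n}. -/
/-!
Normalise `c k` by the geometric interpolation `A ^ (1 - k / 2n) * B ^ (k / 2n)` between
`A = c 0` and `B = c (2n)`. The two families of inequalities say that the square of every
normalised term is bounded by another normalised term (of index `2k`, resp. `2k - 2n`), so the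
maximum `M` of the normalised terms satisfies `M ^ 2 ≤ M`, i.e. `M ≤ 1`; at `k = 1` this is the
claim. This needs `A, B > 0`; the general case follows by letting `A = c 0 + ε`, `B = c (2n) + ε`
and `ε → 0`.
-/

open Filter Topology

theorem Finset.le_of_forall_exists_sq_le_mul {ι R : Type*} [CommRing R] [LinearOrder R]
    [IsStrictOrderedRing R] {s : Finset ι} {f : ι → R} {D : R} (hD : 0 ≤ D)
    (h : ∀ i ∈ s, ∃ j ∈ s, f i ^ 2 ≤ f j * D) {k : ι} (hk : k ∈ s) : f k ≤ D := by
  obtain ⟨m, hm, hmax⟩ := s.exists_max_image f ⟨k, hk⟩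
  obtain ⟨j, hj, hmj⟩ := h m hm
  have hsq : f m ^ 2 ≤ f m * D := hmj.trans (mul_le_mul_of_nonneg_right (hmax j hj) hD)
  have hmD : f m ≤ D := by nlinarith
  exact (hmax k hk).trans hmD

section ScaledPow

variable (n : ℕ) (c : ℕ → ℝ) (A B : ℝ)

/-- `(c k / (A ^ (1 - k / 2n) * B ^ (k / 2n))) ^ 2n`, multiplied by `(A * B) ^ 2n` to avoid
real exponents. -/
def scaledPow (k : ℕ) : ℝ := c k ^ (2 * n) * A ^ k * B ^ (2 * n - k)

variable {n c A B}

theorem scaledPow_sq_le_double {k : ℕ} (hk : k ≤ n) (hA : 0 ≤ A) (hB : 0 ≤ B)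
    (h : c k ^ 2 ≤ c (2 * k) * A) :
    scaledPow n c A B k ^ 2 ≤ scaledPow n c A B (2 * k) * (A * B) ^ (2 * n) :=
  calc scaledPow n c A B k ^ 2 = (c k ^ 2) ^ (2 * n) * (A ^ (2 * k) * B ^ (2 * (2 * n - k))) := by
        unfold scaledPow; ring
    _ ≤ (c (2 * k) * A) ^ (2 * n) * (A ^ (2 * k) * B ^ (2 * (2 * n - k))) := by gcongr
    _ = scaledPow n c A B (2 * k) * (A * B) ^ (2 * n) := by
        unfold scaledPow
        rw [show 2 * (2 * n - k) = (2 * n - 2 * k) + 2 * n by omega]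
        ring

theorem scaledPow_sq_le_fold {k : ℕ} (hk : n ≤ k) (hk' : k ≤ 2 * n) (hA : 0 ≤ A) (hB : 0 ≤ B)
    (h : c k ^ 2 ≤ B * c (2 * k - 2 * n)) :
    scaledPow n c A B k ^ 2 ≤ scaledPow n c A B (2 * k - 2 * n) * (A * B) ^ (2 * n) :=
  calc scaledPow n c A B k ^ 2 = (c k ^ 2) ^ (2 * n) * (A ^ (2 * k) * B ^ (2 * (2 * n - k))) := by
        unfold scaledPow; ring
    _ ≤ (B * c (2 * k - 2 * n)) ^ (2 * n) * (A ^ (2 * k) * B ^ (2 * (2 * n - k))) := by gcongr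
    _ = scaledPow n c A B (2 * k - 2 * n) * (A * B) ^ (2 * n) := by
        rw [← pow_sub_mul_pow A (by omega : 2 * n ≤ 2 * k),
          show 2 * (2 * n - k) = 2 * n - (2 * k - 2 * n) by omega]
        unfold scaledPow
        ring

end ScaledPow

theorem pow_le_of_sq_le_mul {n : ℕ} (hn : 0 < n) {c : ℕ → ℝ} {A B : ℝ} (hA : 0 < A) (hB : 0 < B)
    (h1 : ∀ k ≤ n, c k ^ 2 ≤ c (2 * k) * A)
    (h2 : ∀ k, n ≤ k → k ≤ 2 * n → c k ^ 2 ≤ B * c (2 * k - 2 * n)) :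
    c 1 ^ (2 * n) ≤ A ^ (2 * n - 1) * B := by
  have hmax : scaledPow n c A B 1 ≤ (A * B) ^ (2 * n) := by
    refine Finset.le_of_forall_exists_sq_le_mul (s := Finset.range (2 * n + 1)) (by positivity)
      (fun m hm => ?_) (by simp; omega)
    rw [Finset.mem_range] at hm
    rcases le_total m n with hmn | hnm
    · exact ⟨2 * m, by simp; omega, scaledPow_sq_le_double hmn hA.le hB.le (h1 m hmn)⟩
    · exact ⟨2 * m - 2 * n, by simp; omega,
        scaledPow_sq_le_fold hnm (by omega) hA.le hB.le (h2 m hnm (by omega))⟩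
  obtain ⟨N, hN⟩ : ∃ N, 2 * n = N + 1 := ⟨2 * n - 1, by omega⟩
  unfold scaledPow at hmax
  rw [hN, Nat.add_sub_cancel] at hmax ⊢
  refine le_of_mul_le_mul_right ?_ (by positivity : 0 < A * B ^ N)
  linear_combination hmax

theorem max_principle_sequence_general
    (n : ℕ) (hn : 0 < n) (c : ℕ → ℝ)
    (hnonneg : ∀ k ≤ 2 * n, 0 ≤ c k)
    (h1 : ∀ k ≤ n, (c k) ^ 2 ≤ c (2 * k) * c 0)
    (h2 : ∀ k, n ≤ k → k ≤ 2 * n → (c k) ^ 2 ≤ c (2 * n) * c (2 * k - 2 * n)) :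
    (c 1) ^ (2 * n) ≤ (c 0) ^ (2 * n - 1) * c (2 * n) := by
  have hlim : Tendsto (fun ε : ℝ => (c 0 + ε) ^ (2 * n - 1) * (c (2 * n) + ε)) (𝓝[>] 0)
      (𝓝 (c 0 ^ (2 * n - 1) * c (2 * n))) := by
    exact tendsto_nhdsWithin_of_tendsto_nhds <| (((continuous_const.add continuous_id).pow _).mul
      (continuous_const.add continuous_id)).tendsto' 0 _ (by simp)
  refine ge_of_tendsto hlim (eventually_nhdsWithin_of_forall fun ε (hε : 0 < ε) => ?_)
  have hc0 := hnonneg 0 (Nat.zero_le _)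
  have hc2n := hnonneg (2 * n) le_rfl
  have hA : c 0 ≤ c 0 + ε := le_add_of_nonneg_right hε.le
  have hB : c (2 * n) ≤ c (2 * n) + ε := le_add_of_nonneg_right hε.le
  refine pow_le_of_sq_le_mul hn (by positivity) (by positivity) (fun k hk => ?_)
    (fun k hk hk' => ?_)
  · exact (h1 k hk).trans (by gcongr; exact hnonneg _ (by omega))
  · exact (h2 k hk hk').trans (by gcongr; exact hnonneg _ (by omega))

/-- Maximum-principle lemma from the Fröhlich–Lieb argument: if `(c_k)_{k=0}^{2n}` are
nonnegative with `c_0 > 0`, `c_k² ≤ c_{2k} c_0` for `k ≤ n` and `c_k² ≤ c_{2n} c_{2k-2n}`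
for `n ≤ k ≤ 2n`, then `c_1^{2n} ≤ c_0^{2n-1} c_{2n}`. -/
theorem max_principle_sequence
    (n : ℕ) (hn : 0 < n) (c : ℕ → ℝ)
    (hnonneg : ∀ k ≤ 2 * n, 0 ≤ c k)
    (hc0 : 0 < c 0)
    (h1 : ∀ k ≤ n, (c k) ^ 2 ≤ c (2 * k) * c 0)
    (h2 : ∀ k, n ≤ k → k ≤ 2 * n → (c k) ^ 2 ≤ c (2 * n) * c (2 * k - 2 * n)) :
    (c 1) ^ (2 * n) ≤ (c 0) ^ (2 * n - 1) * c (2 * n) :=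
  max_principle_sequence_general n hn c hnonneg h1 h2
end

section
/- Let ς be a valid six-vertex configuration on T_{N,T} and let L ≤ N. If the sum of the spins on the first L vertical edges in row 1, Σ_{i=1}^L ς(E^v_{i,1}), equals L - 2k, then Σ_{i=1}^L ς(E^v_{i,2}) = L - 2k′ for some k′ ∈ {k-1, k, k+1}. -/
/-- A six-vertex configuration on the torus `T_{N,T}`. -/
structure SixVertexConfig (N T : ℕ) where
  σh : ZMod N → ZMod T → ℤ
  σv : ZMod N → ZMod T → ℤ
  σh_pm : ∀ i j, σh i j = 1 ∨ σh i j = -1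
  σv_pm : ∀ i j, σv i j = 1 ∨ σv i j = -1
  ice : ∀ i j, σh (i - 1) j - σh i j + σv i (j - 1) - σv i j = 0

/-!
Rewriting the ice rule as `σv i j = σv i (j - 1) + (σh (i - 1) j - σh i j)` and summing over
`i = 1, …, L`, the horizontal spins telescope: the magnetization of a row segment changes only by
the difference `σh 0 j - σh L j` of the two horizontal spins at its ends, which is `0` or `±2`.
-/

namespace SixVertexConfig

variable {N T : ℕ} (ς : SixVertexConfig N T)

theorem σv_eq_σv_pred_add (i : ZMod N) (j : ZMod T) :
    ς.σv i j = ς.σv i (j - 1) + (ς.σh (i - 1) j - ς.σh i j) := by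
  linarith [ς.ice i j]

theorem sum_σv_eq_sum_σv_pred_add (L : ℕ) (j : ZMod T) :
    ∑ i ∈ Finset.range L, ς.σv ((i + 1 : ℕ) : ZMod N) j
      = ∑ i ∈ Finset.range L, ς.σv ((i + 1 : ℕ) : ZMod N) (j - 1)
        + (ς.σh ((0 : ℕ) : ZMod N) j - ς.σh ((L : ℕ) : ZMod N) j) := by
  rw [← Finset.sum_range_sub' (fun n : ℕ => ς.σh (n : ZMod N) j), ← Finset.sum_add_distrib]
  refine Finset.sum_congr rfl fun i _ => ?_
  rw [ς.σv_eq_σv_pred_add]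
  push_cast
  rw [add_sub_cancel_right]

theorem exists_σh_sub_σh_eq_two_mul (a b : ZMod N) (j : ZMod T) :
    ∃ d : ℤ, (d = -1 ∨ d = 0 ∨ d = 1) ∧ ς.σh a j - ς.σh b j = 2 * d := by
  rcases ς.σh_pm a j with ha | ha <;> rcases ς.σh_pm b j with hb | hb <;> rw [ha, hb]
  exacts [⟨0, by norm_num⟩, ⟨1, by norm_num⟩, ⟨-1, by norm_num⟩, ⟨0, by norm_num⟩]

end SixVertexConfig

theorem sixVertex_row_magnetization_step_general
    (N T : ℕ) (ς : SixVertexConfig N T)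
    (L : ℕ) (k : ℤ)
    (hrow : ∑ i ∈ Finset.range L, ς.σv (((i : ℕ) + 1 : ℕ) : ZMod N) (1 : ZMod T)
      = (L : ℤ) - 2 * k) :
    ∃ k' : ℤ, (k' = k - 1 ∨ k' = k ∨ k' = k + 1) ∧
      ∑ i ∈ Finset.range L, ς.σv (((i : ℕ) + 1 : ℕ) : ZMod N) (2 : ZMod T)
        = (L : ℤ) - 2 * k' := by
  obtain ⟨d, hd, hsub⟩ :=
    ς.exists_σh_sub_σh_eq_two_mul ((0 : ℕ) : ZMod N) ((L : ℕ) : ZMod N) (2 : ZMod T)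
  refine ⟨k - d, by omega, ?_⟩
  rw [ς.sum_σv_eq_sum_σv_pred_add, show (2 : ZMod T) - 1 = 1 by ring, hrow, hsub]
  ring

/-- When passing from row 1 to row 2, the magnetization of the first `L` vertical edges
changes by at most `2`: if `Σ_{i=1}^L ς(E^v_{i,1}) = L - 2k` then
`Σ_{i=1}^L ς(E^v_{i,2}) = L - 2k'` with `k' ∈ {k-1, k, k+1}`. -/
theorem sixVertex_row_magnetization_step
    (N T : ℕ) (hN : 0 < N) (hT : 0 < T) (ς : SixVertexConfig N T)
    (L : ℕ) (hL : L ≤ N) (k : ℤ)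
    (hrow : ∑ i ∈ Finset.range L, ς.σv (((i : ℕ) + 1 : ℕ) : ZMod N) (1 : ZMod T)
      = (L : ℤ) - 2 * k) :
    ∃ k' : ℤ, (k' = k - 1 ∨ k' = k ∨ k' = k + 1) ∧
      ∑ i ∈ Finset.range L, ς.σv (((i : ℕ) + 1 : ℕ) : ZMod N) (2 : ZMod T)
        = (L : ℤ) - 2 * k' :=
  sixVertex_row_magnetization_step_general N T ς L k hrow
end

section
/- For any self-adjoint operator A on a finite-dimensional complex Hilbert space and any unit vector ψ, Tr(e^{-βA}) ≥ e^{-β⟨ψ, Aψ⟩} for all β ≥ 0. -/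
/-!
Expand `ψ` in an orthonormal eigenbasis of `A`: the weights `wᵢ = |⟨vᵢ, ψ⟩|²` form a probability
vector, `⟨ψ, Aψ⟩ = ∑ wᵢ λᵢ` and `⟨ψ, f(A)ψ⟩ = ∑ wᵢ f(λᵢ)`. For `f(x) = e^{-βx}`, Jensen's
inequality gives `e^{-β⟨ψ, Aψ⟩} ≤ ⟨ψ, e^{-βA}ψ⟩`, and since `0 ≤ wᵢ ≤ 1` and `f ≥ 0` this is at most
`∑ f(λᵢ) = Tr e^{-βA}`.
-/

open Matrix

theorem RCLike.exp_ofReal {𝕜 : Type*} [RCLike 𝕜] (x : ℝ) :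
    NormedSpace.exp (x : 𝕜) = (Real.exp x : 𝕜) := by
  rw [Real.exp_eq_exp_ℝ, ← RCLike.algebraMap_eq_ofReal]
  exact (NormedSpace.algebraMap_exp_comm x).symm

namespace Matrix.IsHermitian

variable {𝕜 n : Type*} [RCLike 𝕜] [Fintype n] [DecidableEq n] {A : Matrix n n 𝕜}

/-- The weight `|⟨vᵢ, ψ⟩|²` of `ψ` on the `i`-th eigenvector of `A`. -/
noncomputable def spectralWeight (hA : A.IsHermitian) (ψ : n → 𝕜) (i : n) : ℝ :=
  ‖(star (hA.eigenvectorUnitary : Matrix n n 𝕜) *ᵥ ψ) i‖ ^ 2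

theorem spectralWeight_nonneg (hA : A.IsHermitian) (ψ : n → 𝕜) (i : n) :
    0 ≤ hA.spectralWeight ψ i := by
  unfold spectralWeight
  positivity

theorem dotProduct_cfc_mulVec (hA : A.IsHermitian) (f : ℝ → ℝ) (ψ : n → 𝕜) :
    star ψ ⬝ᵥ (cfc f A *ᵥ ψ) = ∑ i, ((hA.spectralWeight ψ i * f (hA.eigenvalues i) : ℝ) : 𝕜) := by
  set U : Matrix n n 𝕜 := (hA.eigenvectorUnitary : Matrix n n 𝕜)
  have hstar : star (star U *ᵥ ψ) = star ψ ᵥ* U := by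
    rw [star_mulVec, star_eq_conjTranspose, conjTranspose_conjTranspose]
  rw [hA.cfc_eq, IsHermitian.cfc, Unitary.conjStarAlgAut_apply, ← mulVec_mulVec, ← mulVec_mulVec,
    dotProduct_mulVec, ← hstar, dotProduct]
  refine Finset.sum_congr rfl fun i _ => ?_
  simp only [spectralWeight, mulVec_diagonal, Pi.star_apply, Function.comp_apply, RCLike.star_def]
  push_cast
  rw [← RCLike.conj_mul]
  ring

theorem re_dotProduct_cfc_mulVec (hA : A.IsHermitian) (f : ℝ → ℝ) (ψ : n → 𝕜) :
    RCLike.re (star ψ ⬝ᵥ (cfc f A *ᵥ ψ)) = ∑ i, hA.spectralWeight ψ i * f (hA.eigenvalues i) := by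
  rw [hA.dotProduct_cfc_mulVec, map_sum]
  simp only [RCLike.ofReal_re]

theorem sum_spectralWeight (hA : A.IsHermitian) (ψ : n → 𝕜) :
    ∑ i, hA.spectralWeight ψ i = RCLike.re (star ψ ⬝ᵥ ψ) := by
  simpa [cfc_one ℝ A] using (hA.re_dotProduct_cfc_mulVec 1 ψ).symm

theorem re_dotProduct_mulVec (hA : A.IsHermitian) (ψ : n → 𝕜) :
    RCLike.re (star ψ ⬝ᵥ (A *ᵥ ψ)) = ∑ i, hA.spectralWeight ψ i * hA.eigenvalues i := by
  simpa [cfc_id ℝ A] using hA.re_dotProduct_cfc_mulVec id ψ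

theorem trace_cfc (hA : A.IsHermitian) (f : ℝ → ℝ) :
    (cfc f A).trace = ∑ i, (f (hA.eigenvalues i) : 𝕜) := by
  rw [hA.cfc_eq, IsHermitian.cfc, Unitary.conjStarAlgAut_apply, trace_mul_cycle,
    Unitary.coe_star_mul_self, one_mul, trace_diagonal]
  rfl

theorem exp_smul_eq_cfc (hA : A.IsHermitian) (t : ℝ) :
    NormedSpace.exp (t • A) = cfc (fun x => Real.exp (t * x)) A := by
  set U : Matrix n n 𝕜 := (hA.eigenvectorUnitary : Matrix n n 𝕜)
  have hU : IsUnit U := (Unitary.toUnits hA.eigenvectorUnitary).isUnit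
  have hUinv : U⁻¹ = star U := inv_eq_left_inv (Unitary.coe_star_mul_self _)
  have hsmul : t • A = U * diagonal (fun i => ((t * hA.eigenvalues i : ℝ) : 𝕜)) * U⁻¹ := by
    conv_lhs => rw [hA.spectral_theorem]
    rw [Unitary.conjStarAlgAut_apply, hUinv, ← smul_mul_assoc, ← mul_smul_comm, ← diagonal_smul]
    congr 3 with i
    simp [RCLike.real_smul_eq_coe_smul (K := 𝕜)]
  rw [hA.cfc_eq, IsHermitian.cfc, Unitary.conjStarAlgAut_apply, hsmul, exp_conj _ _ hU,
    exp_diagonal, hUinv]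
  congr 3 with i
  rw [Pi.coe_exp]
  exact RCLike.exp_ofReal _

theorem map_re_dotProduct_mulVec_le_of_convexOn (hA : A.IsHermitian) {f : ℝ → ℝ}
    (hf : ConvexOn ℝ Set.univ f) {ψ : n → 𝕜} (hψ : star ψ ⬝ᵥ ψ = 1) :
    f (RCLike.re (star ψ ⬝ᵥ (A *ᵥ ψ))) ≤ RCLike.re (star ψ ⬝ᵥ (cfc f A *ᵥ ψ)) := by
  have hw : ∑ i, hA.spectralWeight ψ i = 1 := by rw [hA.sum_spectralWeight, hψ, RCLike.one_re]
  rw [hA.re_dotProduct_mulVec, hA.re_dotProduct_cfc_mulVec]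
  exact hf.map_sum_le (fun i _ => hA.spectralWeight_nonneg ψ i) hw (fun _ _ => Set.mem_univ _)

theorem re_dotProduct_cfc_mulVec_le_mul_trace (hA : A.IsHermitian) {f : ℝ → ℝ}
    (hf : ∀ x ∈ spectrum ℝ A, 0 ≤ f x) (ψ : n → 𝕜) :
    RCLike.re (star ψ ⬝ᵥ (cfc f A *ᵥ ψ)) ≤
      RCLike.re (star ψ ⬝ᵥ ψ) * RCLike.re (cfc f A).trace := by
  rw [hA.re_dotProduct_cfc_mulVec, hA.trace_cfc, map_sum, ← hA.sum_spectralWeight, Finset.mul_sum]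
  refine Finset.sum_le_sum fun i _ => ?_
  rw [RCLike.ofReal_re]
  exact mul_le_mul_of_nonneg_right
    (Finset.single_le_sum (fun j _ => hA.spectralWeight_nonneg ψ j) (Finset.mem_univ i))
    (hf _ (hA.eigenvalues_mem_spectrum_real i))

end Matrix.IsHermitian

theorem peierls_bogoliubov_general
    {d : ℕ} (A : Matrix (Fin d) (Fin d) ℂ) (hA : A.IsHermitian)
    (ψ : Fin d → ℂ) (hψ : star ψ ⬝ᵥ ψ = 1) (β : ℝ) :
    Real.exp (-β * (star ψ ⬝ᵥ (A *ᵥ ψ)).re) ≤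
      (NormedSpace.exp ((-β : ℂ) • A)).trace.re := by
  set f : ℝ → ℝ := fun x => Real.exp (-β * x)
  have hexp : NormedSpace.exp ((-β : ℂ) • A) = cfc f A := by
    rw [← Complex.ofReal_neg, Complex.coe_smul, hA.exp_smul_eq_cfc]
  have hf : ConvexOn ℝ Set.univ f := by
    simpa [f, Function.comp_def] using convexOn_exp.comp_linearMap (LinearMap.mulLeft ℝ (-β))
  calc Real.exp (-β * (star ψ ⬝ᵥ (A *ᵥ ψ)).re)
      ≤ (star ψ ⬝ᵥ (cfc f A *ᵥ ψ)).re := hA.map_re_dotProduct_mulVec_le_of_convexOn hf hψ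
    _ ≤ (star ψ ⬝ᵥ ψ).re * (cfc f A).trace.re :=
        hA.re_dotProduct_cfc_mulVec_le_mul_trace (fun x _ => (Real.exp_pos _).le) ψ
    _ = (NormedSpace.exp ((-β : ℂ) • A)).trace.re := by rw [hψ, hexp, Complex.one_re, one_mul]

/-- Peierls–Bogoliubov inequality: for a Hermitian matrix `A`, a unit vector `ψ`, and
`β ≥ 0`, `Tr(e^{-βA}) ≥ e^{-β⟨ψ, Aψ⟩}`. -/
theorem peierls_bogoliubov
    {d : ℕ} (A : Matrix (Fin d) (Fin d) ℂ) (hA : A.IsHermitian)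
    (ψ : Fin d → ℂ) (hψ : star ψ ⬝ᵥ ψ = 1) (β : ℝ) (hβ : 0 ≤ β) :
    Real.exp (-β * (star ψ ⬝ᵥ (A *ᵥ ψ)).re) ≤
      (NormedSpace.exp ((-β : ℂ) • A)).trace.re :=
  peierls_bogoliubov_general A hA ψ hψ β
end
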